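/- The discrete map T₁ on ℝⁿ × ℝⁿ × ℝ given by X_{k+1} = P_k, P_{k+1} = X_{k+1} + ((k−1)/(k+2))(X_{k+1} − X_k), S_{k+1} = ((k−1)/(k+2)) S_k, satisfies the pullback identity dS_{k+1} − (1/2)P_{k+1} dX_{k+1} + (1/2)X_{k+1} dP_{k+1} = ((k−1)/(k+2)) [dS_k − (1/2)P_k dX_k + (1/2)X_k dP_k], i.e. it is a contact transformation of the form η with conformal factor (k−1)/(k+2) (for k ≥ 2). -/

import Mathlib

/-- Euclidean pairing on `ℝⁿ`. -/
def dot {n : ℕ} (x y : Fin n → ℝ) : ℝ := ∑ i, x i * y i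

/-- The contact form `η = dS − ½ P dX + ½ X dP` at point `q = (X, P, S)` on the
tangent vector `t = (u, v, w)`. -/
noncomputable def eta {n : ℕ} (q t : (Fin n → ℝ) × (Fin n → ℝ) × ℝ) : ℝ :=
  t.2.2 - (1 / 2) * dot q.2.1 t.1 + (1 / 2) * dot q.1 t.2.1

/-- The discrete map `T₁ : (X, P, S) ↦ (P, P + c(P − X), cS)` with `c = (k−1)/(k+2)`. -/
def Tmap {n : ℕ} (c : ℝ) (q : (Fin n → ℝ) × (Fin n → ℝ) × ℝ) :
    (Fin n → ℝ) × (Fin n → ℝ) × ℝ :=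
  (q.2.1, fun i => q.2.1 i + c * (q.2.1 i - q.1 i), c * q.2.2)

/-!
`Tmap c` is linear, so its differential at every point is `Tmap c` itself, and
`η(T q, T t) = c η(q, t)` is an algebraic identity. Writing `η(q, t) = w + ½ ω`, with
`ω = X·v − P·u` the symplectic pairing, the `(X, P)`-block of `T` is `[[0, 1], [−c, 1 + c]]`:
its determinant `c` scales `ω`, and the `S`-component is scaled by the same `c`.
-/

namespace Tmap

variable {n : ℕ} (c : ℝ)

theorem map_add (a b : (Fin n → ℝ) × (Fin n → ℝ) × ℝ) :
    Tmap c (a + b) = Tmap c a + Tmap c b := by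
  ext <;> simp only [Tmap, Prod.fst_add, Prod.snd_add, Pi.add_apply] <;> ring

theorem map_smul (r : ℝ) (a : (Fin n → ℝ) × (Fin n → ℝ) × ℝ) :
    Tmap c (r • a) = r • Tmap c a := by
  ext <;> simp only [Tmap, Prod.smul_fst, Prod.smul_snd, Pi.smul_apply, smul_eq_mul] <;> ring

noncomputable def toCLM :
    ((Fin n → ℝ) × (Fin n → ℝ) × ℝ) →L[ℝ] ((Fin n → ℝ) × (Fin n → ℝ) × ℝ) :=
  LinearMap.toContinuousLinearMap
    { toFun := Tmap c, map_add' := map_add c, map_smul' := map_smul c }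

theorem fderiv_eq (q : (Fin n → ℝ) × (Fin n → ℝ) × ℝ) :
    fderiv ℝ (Tmap c) q = toCLM c :=
  (toCLM c).fderiv

theorem eta_map_map (q t : (Fin n → ℝ) × (Fin n → ℝ) × ℝ) :
    eta (Tmap c q) (Tmap c t) = c * eta q t := by
  obtain ⟨X, P, S⟩ := q
  obtain ⟨u, v, w⟩ := t
  -- `dot` is definitionally `⬝ᵥ`, whose bilinearity lemmas then apply
  change c * w - _ * ((P + c • (P - X)) ⬝ᵥ v) + _ * (P ⬝ᵥ (v + c • (v - u))) =
    c * (w - _ * (P ⬝ᵥ u) + _ * (X ⬝ᵥ v))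
  simp only [add_dotProduct, sub_dotProduct, smul_dotProduct, dotProduct_add, dotProduct_sub,
    dotProduct_smul, smul_eq_mul]
  ring

end Tmap

theorem stmt9_general (n : ℕ) (c : ℝ) :
    ∀ q t : (Fin n → ℝ) × (Fin n → ℝ) × ℝ,
      eta (Tmap c q) (fderiv ℝ (Tmap c) q t) = c * eta q t := fun q t => by
  rw [Tmap.fderiv_eq]
  exact Tmap.eta_map_map c q t

/-- For every fixed integer `k ≥ 2`, the discrete map
`X_{k+1} = P_k, P_{k+1} = X_{k+1} + ((k−1)/(k+2))(X_{k+1} − X_k),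
S_{k+1} = ((k−1)/(k+2)) S_k` satisfies the pullback identity
`T₁*η = ((k−1)/(k+2)) η`, i.e. it is a contact transformation of the contact form
`η = dS − ½ P dX + ½ X dP` with conformal factor `(k−1)/(k+2)`. -/
theorem stmt9 (n : ℕ) (k : ℕ) (hk : 2 ≤ k) (c : ℝ)
    (hc : c = ((k : ℝ) - 1) / ((k : ℝ) + 2)) :
    ∀ q t : (Fin n → ℝ) × (Fin n → ℝ) × ℝ,
      eta (Tmap c q) (fderiv ℝ (Tmap c) q t) = c * eta q t :=
  stmt9_general n c
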